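/- arXiv:1301.5311 — 4 statements merged into one kernel-verified Lean document; each statement's English description precedes it below -/
import Mathlib

section
/- Let $q_{-1} = 2/3$ and for $k \ge 1$ let $q_k = Z(k+1) \cdot 9^{-k}$ where $Z(p) = \frac{(2p-4)!}{(p-2)!\,p!}(9/4)^{p-1}$ for $p \ge 2$. Then $q_{-1} + 2\sum_{k\ge 1} q_k = 1$. -/
open scoped Nat

noncomputable def peelA (k : ℕ) : ℝ :=
  ((((2 * (k + 2) - 4)! : ℝ) / (((k + 2 - 2)! : ℝ) * ((k + 2)! : ℝ)))
      * (9 / 4) ^ (k + 2 - 1)) / 9 ^ (k + 1)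

lemma peelA_eq (k : ℕ) :
    peelA k = ((2 * k)! : ℝ) / ((k ! : ℝ) * ((k + 2)! : ℝ)) / 4 ^ (k + 1) := by
  have h1 : 2 * (k + 2) - 4 = 2 * k := by omega
  have h2 : k + 2 - 2 = k := by omega
  have h3 : k + 2 - 1 = k + 1 := by omega
  rw [peelA, h1, h2, h3, div_pow]
  have h9 : (9 : ℝ) ^ (k + 1) ≠ 0 := by positivity
  have h4 : (4 : ℝ) ^ (k + 1) ≠ 0 := by positivity
  field_simp

noncomputable def peelB (n : ℕ) : ℝ :=
  ((2 * n)! : ℝ) / ((n ! : ℝ) * ((n + 1)! : ℝ) * 6 * 4 ^ n)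

lemma peel_partial (n : ℕ) :
    ∑ k ∈ Finset.range n, peelA k = 1 / 6 - peelB n := by
  induction n with
  | zero => simp [peelB, Nat.factorial]
  | succ n ih =>
    rw [Finset.sum_range_succ, ih, peelA_eq]
    have key : peelB n - peelB (n + 1)
        = ((2 * n)! : ℝ) / ((n ! : ℝ) * ((n + 2)! : ℝ)) / 4 ^ (n + 1) := by
      have e1 : (2 * (n + 1))! = (2 * n + 2) * ((2 * n + 1) * (2 * n)!) := by
        have : 2 * (n + 1) = (2 * n + 1) + 1 := by ring
        rw [this, Nat.factorial_succ, Nat.factorial_succ]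
      have e2 : (n + 1)! = (n + 1) * n ! := Nat.factorial_succ n
      have e3 : (n + 2)! = (n + 2) * ((n + 1) * n !) := by
        rw [Nat.factorial_succ, Nat.factorial_succ]
      rw [peelB, peelB, e1, e2, e3]
      push_cast
      have hn : (n ! : ℝ) ≠ 0 := Nat.cast_ne_zero.mpr n.factorial_ne_zero
      have h4 : (4 : ℝ) ^ n ≠ 0 := by positivity
      have hn1 : (n : ℝ) + 1 ≠ 0 := by positivity
      have hn2 : (n : ℝ) + 2 ≠ 0 := by positivity
      field_simp
      ring
    linarith [key]

lemma peelB_tendsto : Filter.Tendsto peelB Filter.atTop (nhds 0) := by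
  have hle : ∀ n : ℕ, peelB n ≤ 1 / (n + 1) := by
    intro n
    have hch : ((2 * n)! : ℝ) = (Nat.choose (2 * n) n : ℝ) * (n ! : ℝ) * (n ! : ℝ) := by
      have h := Nat.choose_mul_factorial_mul_factorial (show n ≤ 2 * n by omega)
      have h2 : 2 * n - n = n := by omega
      rw [h2] at h
      exact_mod_cast congrArg (Nat.cast : ℕ → ℝ) h.symm
    have hcb : (Nat.choose (2 * n) n : ℝ) ≤ 4 ^ n := by
      have h1 : Nat.choose (2 * n) n ≤ Nat.choose (2 * n + 1) n :=
        Nat.choose_le_choose n (by omega)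
      have h2 : Nat.choose (2 * n + 1) n ≤ 4 ^ n := Nat.choose_middle_le_pow n
      exact_mod_cast h1.trans h2
    have hn : (0 : ℝ) < n ! := by exact_mod_cast n.factorial_pos
    have hn1 : (0 : ℝ) < (n + 1)! := by exact_mod_cast (n + 1).factorial_pos
    have e2 : ((n + 1)! : ℝ) = (n + 1) * n ! := by exact_mod_cast Nat.factorial_succ n
    rw [peelB, hch, e2]
    rw [div_le_div_iff₀ (by positivity) (by positivity)]
    push_cast
    have h4 : (0 : ℝ) < 4 ^ n := by positivity
    nlinarith [mul_pos hn hn, mul_le_mul_of_nonneg_right hcb (le_of_lt (mul_pos hn hn)),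
      mul_pos (mul_pos hn hn) h4]
  have hge : ∀ n : ℕ, 0 ≤ peelB n := fun n => by
    rw [peelB]; positivity
  exact squeeze_zero hge hle tendsto_one_div_add_atTop_nhds_zero_nat

lemma peel_hasSum : HasSum peelA (1 / 6) := by
  have hnonneg : ∀ k, 0 ≤ peelA k := fun k => by
    rw [peelA_eq]; positivity
  rw [hasSum_iff_tendsto_nat_of_nonneg hnonneg]
  simp only [peel_partial]
  have : Filter.Tendsto (fun n : ℕ => 1 / 6 - peelB n) Filter.atTop (nhds (1 / 6 - 0)) :=
    (tendsto_const_nhds).sub peelB_tendsto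
  simpa using this

/-- One-step peeling probabilities for the type-2 half-plane UIPT sum to one:
`q₋₁ + 2 ∑_{k≥1} q_k = 1` where `q₋₁ = 2/3`, `q_k = Z(k+1)·9^{-k}` and
`Z(p) = (2p-4)!/((p-2)!·p!)·(9/4)^{p-1}`.  The sum over `k ≥ 1` is written as
a sum over `k : ℕ` of the term at `k+1`, so `Z` is evaluated at `p = k+2 ≥ 2`. -/
theorem peeling_probabilities_sum_to_one :
    (2 / 3 : ℝ) +
      2 * ∑' k : ℕ,
        ((((2 * (k + 2) - 4)! : ℝ) / (((k + 2 - 2)! : ℝ) * ((k + 2)! : ℝ)))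
            * (9 / 4) ^ (k + 2 - 1)) / 9 ^ (k + 1) = 1 := by
  have h : ∑' k : ℕ, peelA k = 1 / 6 := peel_hasSum.tsum_eq
  rw [show (∑' k : ℕ,
        ((((2 * (k + 2) - 4)! : ℝ) / (((k + 2 - 2)! : ℝ) * ((k + 2)! : ℝ)))
            * (9 / 4) ^ (k + 2 - 1)) / 9 ^ (k + 1)) = ∑' k : ℕ, peelA k from rfl, h]
  norm_num
end

section
/- With $Z(p) = \frac{(2p-4)!}{(p-2)!\,p!}(9/4)^{p-1}$ for $p \ge 2$ and $q_k = Z(k+1)\cdot 9^{-k}$ for $k \ge 1$, we have $2\sum_{k\ge 1} k\, q_k = 2/3$. -/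
/-!
With `c k = (2k choose k) / 4 ^ k`, the `k`-th summand equals `c k / (4 (k + 2))`. Since
`c (k + 1) = c k (2k + 1) / (2k + 2)`, this is the difference `B k - B (k + 1)` of the tail
`B k = c k (3k + 2) / (6 (k + 1))`, so the series telescopes to `B 0 = 1/3`; the remainder vanishes
because `c k ^ 2 ≤ 1 / (2k + 1)`.
-/

open scoped Nat
open Filter Topology Finset

theorem Antitone.hasSum_sub_succ {f : ℕ → ℝ} {l : ℝ} (hf : Antitone f)
    (hl : Tendsto f atTop (𝓝 l)) : HasSum (fun n ↦ f n - f (n + 1)) (f 0 - l) := by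
  refine (hasSum_iff_tendsto_nat_of_nonneg (fun n ↦ sub_nonneg.2 (hf n.le_succ)) _).2 ?_
  simpa only [sum_range_sub'] using hl.const_sub (f 0)

noncomputable def centralBinomDivFourPow (n : ℕ) : ℝ := n.centralBinom / 4 ^ n

lemma centralBinomDivFourPow_pos (n : ℕ) : 0 < centralBinomDivFourPow n := by
  unfold centralBinomDivFourPow
  have := n.centralBinom_pos
  positivity

lemma centralBinomDivFourPow_succ (n : ℕ) :
    centralBinomDivFourPow (n + 1) = centralBinomDivFourPow n * (2 * n + 1) / (2 * (n + 1)) := by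
  have h : ((n + 1 : ℕ) : ℝ) * (n + 1).centralBinom = 2 * (2 * n + 1) * n.centralBinom := by
    exact_mod_cast n.succ_mul_centralBinom_succ
  unfold centralBinomDivFourPow
  push_cast at h
  field_simp
  rw [pow_succ]
  linear_combination 2 * 4 ^ n * h

lemma centralBinomDivFourPow_sq_le (n : ℕ) :
    centralBinomDivFourPow n ^ 2 ≤ 1 / (2 * n + 1) := by
  induction n with
  | zero => simp [centralBinomDivFourPow]
  | succ n ih =>
      have ih' : centralBinomDivFourPow n ^ 2 * (2 * n + 1) ≤ 1 :=
        (le_div_iff₀ (by positivity)).mp ih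
      rw [centralBinomDivFourPow_succ, div_pow, div_le_div_iff₀ (by positivity) (by positivity)]
      push_cast
      nlinarith [mul_le_mul_of_nonneg_right ih'
        (show (0 : ℝ) ≤ (2 * n + 1) * (2 * n + 3) by positivity)]

lemma tendsto_centralBinomDivFourPow : Tendsto centralBinomDivFourPow atTop (𝓝 0) := by
  have h : Tendsto (fun n : ℕ ↦ 2 * (n : ℝ) + 1) atTop atTop :=
    tendsto_atTop_add_const_right _ _ (tendsto_natCast_atTop_atTop.const_mul_atTop two_pos)
  have hs : Tendsto (fun n : ℕ ↦ √(1 / (2 * (n : ℝ) + 1))) atTop (𝓝 0) := by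
    simpa using h.inv_tendsto_atTop.sqrt
  refine squeeze_zero (fun n ↦ (centralBinomDivFourPow_pos n).le) (fun n ↦ ?_) hs
  simpa [Real.sqrt_sq (centralBinomDivFourPow_pos n).le] using
    Real.sqrt_le_sqrt (centralBinomDivFourPow_sq_le n)

noncomputable def swallowedTail (n : ℕ) : ℝ :=
  centralBinomDivFourPow n * (3 * n + 2) / (6 * (n + 1))

lemma swallowedTail_sub_succ (n : ℕ) :
    swallowedTail n - swallowedTail (n + 1) = centralBinomDivFourPow n / (4 * (n + 2)) := by
  unfold swallowedTail
  rw [centralBinomDivFourPow_succ]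
  push_cast
  field_simp
  ring

lemma antitone_swallowedTail : Antitone swallowedTail :=
  antitone_nat_of_succ_le fun n ↦ sub_nonneg.1 <| by
    rw [swallowedTail_sub_succ]; have := centralBinomDivFourPow_pos n; positivity

lemma tendsto_swallowedTail : Tendsto swallowedTail atTop (𝓝 0) := by
  refine squeeze_zero (fun n ↦ ?_) (fun n ↦ ?_) tendsto_centralBinomDivFourPow
  · have := centralBinomDivFourPow_pos n; unfold swallowedTail; positivity
  · have := centralBinomDivFourPow_pos n
    unfold swallowedTail
    rw [div_le_iff₀ (by positivity)]
    nlinarith [(n.cast_nonneg : (0 : ℝ) ≤ n)]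

lemma summand_eq_centralBinomDivFourPow (k : ℕ) :
    ((k + 1 : ℝ)) * (((((2 * (k + 2) - 4)! : ℝ) / (((k + 2 - 2)! : ℝ) * ((k + 2)! : ℝ)))
      * (9 / 4) ^ (k + 2 - 1)) / 9 ^ (k + 1)) = centralBinomDivFourPow k / (4 * (k + 2)) := by
  have hc : (k.centralBinom : ℝ) * k ! * k ! = (2 * k)! := by
    have := Nat.choose_mul_factorial_mul_factorial (n := 2 * k) (k := k) (by omega)
    rw [show 2 * k - k = k by omega] at this
    exact_mod_cast this
  rw [show 2 * (k + 2) - 4 = 2 * k by omega, show k + 2 - 2 = k by omega,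
    show k + 2 - 1 = k + 1 by omega, ← hc, Nat.factorial_succ, Nat.factorial_succ]
  unfold centralBinomDivFourPow
  have := k.factorial_pos
  push_cast
  rw [div_pow]
  field_simp
  ring

/-- The expected number of swallowed edges for the type-2 half-plane UIPT:
`2 ∑_{k≥1} k q_k = 2/3` where `q_k = Z(k+1)·9^{-k}` and
`Z(p) = (2p-4)!/((p-2)!·p!)·(9/4)^{p-1}` for `p ≥ 2`. -/
theorem expected_swallowed_edges_type2 :
    2 * ∑' k : ℕ,
        ((k + 1 : ℝ)) *
          (((((2 * (k + 2) - 4)! : ℝ) / (((k + 2 - 2)! : ℝ) * ((k + 2)! : ℝ)))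
              * (9 / 4) ^ (k + 2 - 1)) / 9 ^ (k + 1)) = 2 / 3 := by
  have hsum := antitone_swallowedTail.hasSum_sub_succ tendsto_swallowedTail
  simp only [swallowedTail_sub_succ, ← summand_eq_centralBinomDivFourPow] at hsum
  rw [hsum.tsum_eq]
  norm_num [swallowedTail, centralBinomDivFourPow]
end

section
/- Let $(S_n)$ be a random walk with $S_0 = 1$ and i.i.d. integer increments $\xi_i$ satisfying $\xi_i \le 1$, $\mathbb{E}[\xi_1] = 0$, and $\mathbb{P}(\xi_1 = -k)$ regularly varying of index $-5/2$. Let $\tau = \inf\{n \ge 1 : S_n \le 0\}$ and let $\mathcal{R}_n = (-\xi_n)^+$. Then for every $n$ and every $k \ge 0$, the events $\{\tau > n\}$ and $\{\mathcal{R}_n > k\}$ are negatively correlated: $\mathbb{P}(\tau > n, \mathcal{R}_n > k) \le \mathbb{P}(\tau > n)\,\mathbb{P}(\mathcal{R}_n > k)$. -/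
/-!
Given the first `n - 1` steps, survival up to time `n` says that the last step `ξ (n - 1)` exceeds
a threshold determined by them, so it is an up-set in that step, while `{ℛ_n > k}` is the down-set
`{ξ (n - 1) < -k}`. By independence the joint law of past and last step is a product measure, and
on each fibre an up-set and a down-set of a linear order are negatively correlated (Harris'
inequality in dimension one); integrating over the past gives the claim.
-/

open MeasureTheory ProbabilityTheory Filter

theorem measure_inter_le_mul_of_isUpperSet_of_isLowerSet {α : Type*} [MeasurableSpace α]
    [LinearOrder α] (ν : Measure α) [IsProbabilityMeasure ν] {U L : Set α}
    (hU : IsUpperSet U) (hL : IsLowerSet L) (hLm : MeasurableSet L) :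
    ν (U ∩ L) ≤ ν U * ν L := by
  rcases hU.total hL.compl with hUL | hLU
  · rw [Set.disjoint_iff_inter_eq_empty.mp (Set.subset_compl_iff_disjoint_right.mp hUL)]
    simp
  · refine (ENNReal.add_le_add_iff_right (measure_ne_top ν Lᶜ)).mp ?_
    calc ν (U ∩ L) + ν Lᶜ = ν U := by
          rw [← measure_inter_add_sdiff U hLm, Set.sdiff_eq, Set.inter_eq_right.mpr hLU]
      _ = ν U * ν L + ν U * ν Lᶜ := by rw [← mul_add, prob_add_prob_compl hLm, mul_one]
      _ ≤ ν U * ν L + ν Lᶜ := by gcongr; exact mul_le_of_le_one_left zero_le prob_le_one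

theorem measure_inter_le_mul_of_indepFun {Ω β α : Type*} [MeasurableSpace Ω]
    [MeasurableSpace β] [MeasurableSpace α] [LinearOrder α]
    {μ : Measure Ω} [IsProbabilityMeasure μ] {Y : Ω → β} {X : Ω → α}
    (hY : AEMeasurable Y μ) (hX : AEMeasurable X μ) (hYX : IndepFun Y X μ)
    {S : Set (β × α)} (hS : MeasurableSet S) (hSup : ∀ y, IsUpperSet (Prod.mk y ⁻¹' S))
    {L : Set α} (hL : IsLowerSet L) (hLm : MeasurableSet L) :
    μ ((fun ω => (Y ω, X ω)) ⁻¹' S ∩ X ⁻¹' L)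
      ≤ μ ((fun ω => (Y ω, X ω)) ⁻¹' S) * μ (X ⁻¹' L) := by
  have hYXm : AEMeasurable (fun ω => (Y ω, X ω)) μ := hY.prodMk hX
  have hlaw : μ.map (fun ω => (Y ω, X ω)) = (μ.map Y).prod (μ.map X) :=
    (indepFun_iff_map_prod_eq_prod_map_map hY hX).mp hYX
  have := Measure.isProbabilityMeasure_map (μ := μ) hX
  have := Measure.isProbabilityMeasure_map (μ := μ) hY
  have hSL : MeasurableSet (S ∩ Prod.snd ⁻¹' L) := hS.inter (measurable_snd hLm)
  calc μ ((fun ω => (Y ω, X ω)) ⁻¹' S ∩ X ⁻¹' L)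
      = (μ.map Y).prod (μ.map X) (S ∩ Prod.snd ⁻¹' L) := by
        rw [← hlaw, Measure.map_apply_of_aemeasurable hYXm hSL]; rfl
    _ = ∫⁻ y, μ.map X (Prod.mk y ⁻¹' S ∩ L) ∂μ.map Y := Measure.prod_apply hSL
    _ ≤ ∫⁻ y, μ.map X (Prod.mk y ⁻¹' S) * μ.map X L ∂μ.map Y :=
        lintegral_mono fun y =>
          measure_inter_le_mul_of_isUpperSet_of_isLowerSet _ (hSup y) hL hLm
    _ = μ ((fun ω => (Y ω, X ω)) ⁻¹' S) * μ (X ⁻¹' L) := by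
        rw [lintegral_mul_const _ (measurable_measure_prodMk_left hS), ← Measure.prod_apply hS,
          ← hlaw, Measure.map_apply_of_aemeasurable hYXm hS,
          Measure.map_apply_of_aemeasurable hX hLm]

theorem ProbabilityTheory.iIndepFun.indepFun_restrict_of_notMem {Ω ι β : Type*}
    [MeasurableSpace Ω] {μ : Measure Ω} [MeasurableSpace β] {f : ι → Ω → β} (hf : iIndepFun f μ)
    (hfm : ∀ i, Measurable (f i)) {s : Finset ι} {j : ι} (hj : j ∉ s) :
    IndepFun (fun ω (i : s) => f i ω) (f j) μ :=
  (hf.indepFun_finset s {j} (Finset.disjoint_singleton_right.mpr hj) hfm).comp measurable_id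
    (measurable_pi_apply (⟨j, Finset.mem_singleton_self j⟩ : ({j} : Finset ι)))

def StaysPositive (n : ℕ) (s : ℕ → ℤ) : Prop :=
  ∀ m : ℕ, 1 ≤ m → m ≤ n → 0 < 1 + ∑ i ∈ Finset.range m, s i

theorem monotone_staysPositive (n : ℕ) : Monotone (StaysPositive n) :=
  fun _ _ hst hs m hm hmn => (hs m hm hmn).trans_le (by gcongr with i; exact hst i)

theorem staysPositive_congr {n : ℕ} {s t : ℕ → ℤ} (h : ∀ i < n, s i = t i) :
    StaysPositive n s ↔ StaysPositive n t := by
  have hsum : ∀ m ≤ n, ∑ i ∈ Finset.range m, s i = ∑ i ∈ Finset.range m, t i :=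
    fun m hm => Finset.sum_congr rfl fun i hi => h i ((Finset.mem_range.mp hi).trans_le hm)
  exact forall₂_congr fun m _ => imp_congr_right fun hm => by rw [hsum m hm]

def prefixThen {α : Type*} {N : ℕ} (y : Finset.range N → α) (x : α) : ℕ → α :=
  fun i => if h : i ∈ Finset.range N then y ⟨i, h⟩ else x

theorem monotone_prefixThen {α : Type*} [Preorder α] {N : ℕ} (y : Finset.range N → α) :
    Monotone (prefixThen y) := by
  intro x x' hx i
  unfold prefixThen
  split_ifs
  exacts [le_rfl, hx]

theorem prefixThen_restrict_apply {α : Type*} {N : ℕ} (s : ℕ → α) {i : ℕ} (hi : i ≤ N) :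
    prefixThen (fun j : Finset.range N => s j) (s N) i = s i := by
  unfold prefixThen
  split_ifs with h
  · rfl
  · rw [show i = N by simp only [Finset.mem_range, not_lt] at h; omega]

theorem isUpperSet_staysPositive_prefixThen (n : ℕ) {N : ℕ} (y : Finset.range N → ℤ) :
    IsUpperSet {x | StaysPositive n (prefixThen y x)} :=
  isUpperSet_setOfPred.mpr ((monotone_staysPositive n).comp (monotone_prefixThen y))

theorem survival_jump_negative_correlation_general
    {Ω : Type*} [MeasureSpace Ω] [IsProbabilityMeasure (ℙ : Measure Ω)]
    (ξ : ℕ → Ω → ℤ)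
    (hmeas : ∀ i, Measurable (ξ i))
    (hindep : iIndepFun ξ ℙ)
    (n : ℕ) (k : ℕ) :
    ℙ ({ω | ∀ m : ℕ, 1 ≤ m → m ≤ n → 0 < 1 + ∑ i ∈ Finset.range m, ξ i ω}
        ∩ {ω | (k : ℤ) < max (-(ξ (n - 1) ω)) 0})
      ≤ ℙ {ω | ∀ m : ℕ, 1 ≤ m → m ≤ n → 0 < 1 + ∑ i ∈ Finset.range m, ξ i ω}
        * ℙ {ω | (k : ℤ) < max (-(ξ (n - 1) ω)) 0} := by
  set N := n - 1
  have hsurvival : {ω | ∀ m : ℕ, 1 ≤ m → m ≤ n → 0 < 1 + ∑ i ∈ Finset.range m, ξ i ω}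
      = (fun ω => (fun i : Finset.range N => ξ i ω, ξ N ω)) ⁻¹'
          {p | StaysPositive n (prefixThen p.1 p.2)} := by
    ext ω
    exact (staysPositive_congr fun i hi => prefixThen_restrict_apply (ξ · ω) (by omega)).symm
  have hjump : {ω | (k : ℤ) < max (-(ξ N ω)) 0} = ξ N ⁻¹' Set.Iio (-k) := by
    ext ω
    simp only [Set.mem_ofPred_eq, Set.mem_preimage, Set.mem_Iio, lt_max_iff]
    omega
  rw [hsurvival, hjump]
  exact measure_inter_le_mul_of_indepFun
    (measurable_pi_lambda (fun ω (i : Finset.range N) => ξ i ω) fun i => hmeas i).aemeasurable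
    (hmeas N).aemeasurable (hindep.indepFun_restrict_of_notMem hmeas (by simp))
    (Set.to_countable _).measurableSet (isUpperSet_staysPositive_prefixThen n)
    (isLowerSet_Iio _) measurableSet_Iio

/-- Negative correlation of survival and jump size: for the exploration walk
`S_n = 1 + ξ₁ + ⋯ + ξ_n` (i.i.d. integer steps with `ξ ≤ 1`, mean `0`, and
left tail `ℙ(ξ = -k) ~ c k^{-5/2}`, a regularly varying tail of index `-5/2`),
with `τ = inf{n ≥ 1 : S_n ≤ 0}` and `ℛ_n = (-ξ_n)⁺`, the events `{τ > n}` and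
`{ℛ_n > k}` are negatively correlated. -/
theorem survival_jump_negative_correlation
    {Ω : Type*} [MeasureSpace Ω] [IsProbabilityMeasure (ℙ : Measure Ω)]
    (ξ : ℕ → Ω → ℤ) (c : ℝ) (hc : 0 < c)
    (hmeas : ∀ i, Measurable (ξ i))
    (hindep : iIndepFun ξ ℙ)
    (hident : ∀ i, IdentDistrib (ξ i) (ξ 0) ℙ ℙ)
    (hbound : ∀ i, ∀ᵐ ω ∂(ℙ : Measure Ω), ξ i ω ≤ 1)
    (hint : Integrable (fun ω => (ξ 0 ω : ℝ)) ℙ)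
    (hmean : ∫ ω, (ξ 0 ω : ℝ) ∂ℙ = 0)
    (htail : Tendsto
      (fun k : ℕ => (ℙ {ω | ξ 0 ω = -(k : ℤ)}).toReal * (k : ℝ) ^ ((5 : ℝ) / 2))
      atTop (nhds c))
    (n : ℕ) (hn : 1 ≤ n) (k : ℕ) :
    ℙ ({ω | ∀ m : ℕ, 1 ≤ m → m ≤ n → 0 < 1 + ∑ i ∈ Finset.range m, ξ i ω}
        ∩ {ω | (k : ℤ) < max (-(ξ (n - 1) ω)) 0})
      ≤ ℙ {ω | ∀ m : ℕ, 1 ≤ m → m ≤ n → 0 < 1 + ∑ i ∈ Finset.range m, ξ i ω}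
        * ℙ {ω | (k : ℤ) < max (-(ξ (n - 1) ω)) 0} :=
  survival_jump_negative_correlation_general ξ hmeas hindep n k
end

section
/- Let $q_{-1} = 1/\sqrt{3}$ and for $k \ge 0$ let $q_k = Z(k+1) \cdot 12^{-k}$, where $Z(1) = \frac{2-\sqrt{3}}{4}$ and $Z(p) = \frac{(2p-5)!!\, 6^p}{8\sqrt{3}\, p!}$ for $p \ge 2$ (with $(-1)!! = 1$). Then $2\sum_{k \ge 0} k\, q_k = \frac{1}{\sqrt{3}}$. -/
open scoped Nat

open Filter

noncomputable def gAux (n : ℕ) : ℝ :=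
  (6 * n + 4) * ((2 * n - 1)‼ : ℝ) / (8 * Real.sqrt 3 * 2 ^ n * ((n + 1)! : ℝ))

noncomputable def fAux (k : ℕ) : ℝ :=
  (k : ℝ) *
    ((if k = 0 then (2 - Real.sqrt 3) / 4
      else (((2 * (k + 1) - 5)‼ : ℝ) * 6 ^ (k + 1)) / (8 * Real.sqrt 3 * ((k + 1)! : ℝ)))
      / 12 ^ k)

lemma sqrt3_pos : (0:ℝ) < Real.sqrt 3 := Real.sqrt_pos.mpr (by norm_num)

lemma dfac_succ (n : ℕ) : ((2 * (n + 1) - 1)‼ : ℕ) = (2 * n + 1) * (2 * n - 1)‼ := by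
  cases n with
  | zero => rfl
  | succ m =>
    have h1 : 2 * (m + 1 + 1) - 1 = (2 * (m + 1) - 1) + 2 := by omega
    rw [h1, Nat.doubleFactorial_add_two]
    congr 1

lemma fAux_nonneg (k : ℕ) : 0 ≤ fAux k := by
  cases k with
  | zero => simp [fAux]
  | succ m =>
    have h : Real.sqrt 3 > 0 := sqrt3_pos
    unfold fAux
    rw [if_neg (Nat.succ_ne_zero m)]
    positivity

lemma key (n : ℕ) : fAux (n + 1) = gAux n - gAux (n + 1) := by
  have hcast : ((2 * (n + 1 + 1) - 5)‼ : ℕ) = (2 * n - 1)‼ := by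
    rw [show 2 * (n + 1 + 1) - 5 = 2 * n - 1 from by omega]
  have hd : ((2 * (n + 1) - 1)‼ : ℕ) = (2 * n + 1) * (2 * n - 1)‼ := dfac_succ n
  have hf2 : ((n + 1 + 1)! : ℕ) = (n + 2) * ((n + 1) * n !) := by
    rw [Nat.factorial_succ, Nat.factorial_succ]
  have hs : Real.sqrt 3 ≠ 0 := ne_of_gt sqrt3_pos
  have hF : ((n)! : ℝ) ≠ 0 := Nat.cast_ne_zero.mpr (Nat.factorial_ne_zero n)
  have h12 : (12:ℝ) ^ (n+1) = 12 * (6 ^ n * 2 ^ n) := by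
    rw [pow_succ]
    rw [show (12:ℝ) = 6 * 2 by norm_num, mul_pow]
    ring
  unfold fAux gAux
  rw [if_neg (Nat.succ_ne_zero n)]
  rw [hcast, hd, hf2, Nat.factorial_succ n, h12]
  push_cast
  field_simp
  ring

lemma sum_eq (n : ℕ) : ∑ i ∈ Finset.range (n + 1), fAux i = gAux 0 - gAux n := by
  induction n with
  | zero => simp [fAux]
  | succ m ih =>
    rw [Finset.sum_range_succ, ih, key]
    ring

lemma bAux_le (n : ℕ) : ((2 * n - 1)‼ : ℝ) / (2 ^ n * n !) ≤ Real.sqrt (1 / (2 * n + 1)) := by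
  have hb : ∀ m : ℕ, (((2 * m - 1)‼ : ℝ) / (2 ^ m * m !)) ^ 2 ≤ 1 / (2 * m + 1) := by
    intro m
    induction m with
    | zero => norm_num
    | succ p ih =>
      have hF : ((p)! : ℝ) ≠ 0 := Nat.cast_ne_zero.mpr (Nat.factorial_ne_zero p)
      have hrec : ((2 * (p + 1) - 1)‼ : ℝ) / (2 ^ (p+1) * (p+1)!) =
          (((2 * p - 1)‼ : ℝ) / (2 ^ p * p !)) * ((2 * p + 1) / (2 * p + 2)) := by
        rw [show ((2 * (p + 1) - 1)‼ : ℕ) = (2 * p + 1) * (2 * p - 1)‼ from dfac_succ p,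
          Nat.factorial_succ, pow_succ]
        push_cast
        field_simp
      rw [hrec, mul_pow]
      have h1 : (((2 * p - 1)‼ : ℝ) / (2 ^ p * p !)) ^ 2 * ((2 * p + 1) / (2 * p + 2)) ^ 2
          ≤ (1 / (2 * p + 1)) * ((2 * p + 1) / (2 * p + 2)) ^ 2 := by
        apply mul_le_mul_of_nonneg_right ih
        positivity
      refine h1.trans ?_
      rw [div_pow]
      rw [div_mul_div_comm, div_le_div_iff₀ (by positivity) (by positivity)]
      push_cast
      ring_nf
      nlinarith [sq_nonneg ((p:ℝ))]
  have hpos : (0:ℝ) ≤ ((2 * n - 1)‼ : ℝ) / (2 ^ n * n !) := by positivity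
  exact (Real.le_sqrt hpos (by positivity)).mpr (hb n)

lemma gAux_tendsto : Tendsto gAux atTop (nhds 0) := by
  have hle : ∀ n : ℕ, gAux n ≤ Real.sqrt (1 / (2 * n + 1)) := by
    intro n
    have h1 : gAux n ≤ ((2 * n - 1)‼ : ℝ) / (2 ^ n * n !) := by
      unfold gAux
      rw [Nat.factorial_succ]
      push_cast
      rw [div_le_div_iff₀ (by positivity) (by positivity)]
      have hD : (0:ℝ) ≤ ((2 * n - 1)‼ : ℕ) := Nat.cast_nonneg _
      have hs : (1:ℝ) ≤ Real.sqrt 3 := by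
        rw [show (1:ℝ) = Real.sqrt 1 by simp]
        exact Real.sqrt_le_sqrt (by norm_num)
      have h2 : (6 * (n:ℝ) + 4) ≤ 8 * ((n:ℝ) + 1) := by linarith [Nat.cast_nonneg (α := ℝ) n]
      have h3 : 8 * ((n:ℝ) + 1) ≤ 8 * Real.sqrt 3 * ((n:ℝ) + 1) := by
        nlinarith [Nat.cast_nonneg (α := ℝ) n]
      have hP : (0:ℝ) ≤ (((2 * n - 1)‼ : ℕ) : ℝ) * (2 ^ n * (n ! : ℝ)) := by positivity
      nlinarith [mul_le_mul_of_nonneg_right (h2.trans h3) hP]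
    exact h1.trans (bAux_le n)
  have hge : ∀ n : ℕ, 0 ≤ gAux n := by
    intro n
    unfold gAux
    have := sqrt3_pos
    positivity
  have htend : Tendsto (fun n : ℕ => Real.sqrt (1 / (2 * n + 1))) atTop (nhds 0) := by
    have h1 : Tendsto (fun n : ℕ => (1:ℝ) / (2 * n + 1)) atTop (nhds 0) := by
      simp only [one_div]
      apply Tendsto.comp tendsto_inv_atTop_zero
      apply tendsto_atTop_add_const_right
      exact (tendsto_natCast_atTop_atTop (R := ℝ)).const_mul_atTop (by norm_num)
    have h2 := (Real.continuous_sqrt.tendsto 0).comp h1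
    rw [Real.sqrt_zero] at h2
    simpa [Function.comp_def] using h2
  exact squeeze_zero hge hle htend

lemma hasSum_fAux : HasSum fAux (gAux 0) := by
  rw [hasSum_iff_tendsto_nat_of_nonneg fAux_nonneg]
  rw [← tendsto_add_atTop_iff_nat 1]
  simp only [sum_eq]
  have : Tendsto (fun n : ℕ => gAux 0 - gAux n) atTop (nhds (gAux 0 - 0)) :=
    tendsto_const_nhds.sub gAux_tendsto
  simpa using this

/-- Expected swallowed edges for the type-1 half-plane UIPT:
`2 ∑_{k≥0} k q_k = 1/√3`, with `q_k = Z(k+1)·12^{-k}`, `Z(1) = (2-√3)/4` and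
`Z(p) = (2p-5)‼ · 6^p / (8√3 · p!)` for `p ≥ 2` (natural subtraction gives
`2·2-5 = 0` and `0‼ = 1 = (-1)‼` at `p = 2`). -/
theorem expected_swallowed_edges_type1 :
    2 * ∑' k : ℕ, (k : ℝ) *
        ((if k = 0 then (2 - Real.sqrt 3) / 4
          else (((2 * (k + 1) - 5)‼ : ℝ) * 6 ^ (k + 1)) / (8 * Real.sqrt 3 * ((k + 1)! : ℝ)))
          / 12 ^ k)
      = 1 / Real.sqrt 3 := by
  have h : (∑' k : ℕ, fAux k) = gAux 0 := hasSum_fAux.tsum_eq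
  unfold fAux at h
  rw [h]
  unfold gAux
  have hs : Real.sqrt 3 ≠ 0 := ne_of_gt sqrt3_pos
  norm_num [Nat.doubleFactorial]
  field_simp
  ring
end
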